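/- arXiv:2506.13083 — 7 statements merged into one kernel-verified Lean document; each statement's English description precedes it below -/
import Mathlib

section
/- Let K be a positive integer and consider two multinomial opinions over K classes with belief masses b^xi, b^phi : Fin K → ℝ and uncertainty masses u_xi, u_phi, satisfying b_k^xi ≥ 0 and b_k^phi ≥ 0 for all k, 0 < u_xi ≤ 1, 0 < u_phi ≤ 1, sum over k of b_k^xi plus u_xi equals 1, and sum over k of b_k^phi plus u_phi equals 1. Then the CBF fused quantities again form a valid multinomial opinion: b_hat_k ≥ 0 for all k, u_hat > 0, and the sum over k of b_hat_k plus u_hat equals 1. -/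
open Finset in
/-- The CBF fused belief and uncertainty masses of two valid multinomial opinions
again form a valid multinomial opinion. -/
theorem cbf_valid_opinion (K : ℕ) (hK : 0 < K)
    (bxi bphi : Fin K → ℝ) (u_xi u_phi : ℝ)
    (hbxi : ∀ k, 0 ≤ bxi k) (hbphi : ∀ k, 0 ≤ bphi k)
    (hxi0 : 0 < u_xi) (hxi1 : u_xi ≤ 1) (hphi0 : 0 < u_phi) (hphi1 : u_phi ≤ 1)
    (hsumxi : ∑ k, bxi k + u_xi = 1) (hsumphi : ∑ k, bphi k + u_phi = 1) :
    (∀ k, 0 ≤ (bxi k * u_phi + u_xi * bphi k) / (u_xi + u_phi - u_xi * u_phi)) ∧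
    0 < (u_xi * u_phi) / (u_xi + u_phi - u_xi * u_phi) ∧
    (∑ k, (bxi k * u_phi + u_xi * bphi k) / (u_xi + u_phi - u_xi * u_phi))
      + (u_xi * u_phi) / (u_xi + u_phi - u_xi * u_phi) = 1 := by
  have hD : 0 < u_xi + u_phi - u_xi * u_phi := by nlinarith
  refine ⟨fun k => div_nonneg (by nlinarith [hbxi k, hbphi k]) hD.le,
    div_pos (mul_pos hxi0 hphi0) hD, ?_⟩
  rw [← Finset.sum_div, ← add_div, div_eq_one_iff_eq hD.ne']
  rw [Finset.sum_add_distrib, ← Finset.sum_mul, ← Finset.mul_sum]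
  have h1 : ∑ k, bxi k = 1 - u_xi := by linarith
  have h2 : ∑ k, bphi k = 1 - u_phi := by linarith
  rw [h1, h2]; ring
end

section
/- Let K be a positive integer, let t be a fixed class index, and consider two multinomial opinions over K classes with belief masses b^xi, b^phi : Fin K → ℝ (all nonnegative) and uncertainty masses u_xi, u_phi with 0 < u_xi ≤ 1 and 0 < u_phi ≤ 1. Suppose b_t^xi ≥ b_m^phi, where b_m^phi denotes the largest belief mass of the second opinion (i.e., b_t^xi ≥ b_k^phi for every class k). Then the CBF fused belief mass of class t satisfies b_hat_t ≥ b_t^phi. (Paper's Proposition 3: fusing in an opinion whose ground-truth belief dominates the other view's maximal belief cannot decrease the ground-truth belief.) -/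
/-- Proposition 3: if the ground-truth belief of view ξ dominates the maximal belief
of view φ, then the CBF fused ground-truth belief is at least that of view φ. -/
theorem cbf_belief_ge (K : ℕ) (hK : 0 < K) (t : Fin K)
    (bxi bphi : Fin K → ℝ) (u_xi u_phi : ℝ)
    (hbxi : ∀ k, 0 ≤ bxi k) (hbphi : ∀ k, 0 ≤ bphi k)
    (hxi0 : 0 < u_xi) (hxi1 : u_xi ≤ 1) (hphi0 : 0 < u_phi) (hphi1 : u_phi ≤ 1)
    (hdom : ∀ k, bphi k ≤ bxi t) :
    bphi t ≤ (bxi t * u_phi + u_xi * bphi t) / (u_xi + u_phi - u_xi * u_phi) := by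
  have hD : 0 < u_xi + u_phi - u_xi * u_phi := by nlinarith
  rw [le_div_iff₀ hD]
  nlinarith [hbphi t, hdom t, mul_nonneg (hbphi t) hphi0.le]
end

section
/- Let u_xi, u_phi be real numbers with 0 < u_xi ≤ 1 and 0 < u_phi ≤ 1, and let b_t^xi ≥ 0 and b_t^phi ≥ 0 be belief masses of the two views for a fixed class t. Then the decrease in belief caused by fusion is bounded: b_t^phi − b_hat_t ≤ b_t^phi * u_phi / (u_xi + u_phi), where b_hat_t = (b_t^xi*u_phi + u_xi*b_t^phi)/(u_xi + u_phi − u_xi*u_phi). (Paper's Proposition 4: when u_phi is small, the possible performance loss from integrating another opinion is limited and positively correlated with u_phi.) -/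
/-- Proposition 4: the decrease in belief caused by fusion is bounded by
`b_t^phi * u_phi / (u_xi + u_phi)`. -/
theorem cbf_belief_decrease_bounded (u_xi u_phi bxi bphi : ℝ)
    (hxi0 : 0 < u_xi) (hxi1 : u_xi ≤ 1) (hphi0 : 0 < u_phi) (hphi1 : u_phi ≤ 1)
    (hbxi : 0 ≤ bxi) (hbphi : 0 ≤ bphi) :
    bphi - (bxi * u_phi + u_xi * bphi) / (u_xi + u_phi - u_xi * u_phi)
      ≤ bphi * u_phi / (u_xi + u_phi) := by
  have hS : 0 < u_xi + u_phi := by linarith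
  have hD : 0 < u_xi + u_phi - u_xi * u_phi := by nlinarith
  rw [sub_le_iff_le_add, div_add_div _ _ (ne_of_gt hS) (ne_of_gt hD),
    le_div_iff₀ (by positivity)]
  nlinarith [mul_nonneg hbxi hphi0.le, mul_nonneg (mul_nonneg hbphi hphi0.le) (mul_pos hxi0 hxi0).le,
    mul_nonneg (mul_nonneg hbxi hphi0.le) hS.le]
end

section
/- Let K be a positive integer and let e^xi, e^phi : Fin K → ℝ be evidence vectors with e_k^xi ≥ 0 and e_k^phi ≥ 0 for all k. Define the Dirichlet strengths S_xi = K + sum over k of e_k^xi and S_phi = K + sum over k of e_k^phi, the belief masses b_k^xi = e_k^xi/S_xi, b_k^phi = e_k^phi/S_phi, and the uncertainty masses u_xi = K/S_xi, u_phi = K/S_phi. Then the CBF fused opinion equals the opinion obtained by adding the evidence vectors: with S_hat = K + sum over k of (e_k^xi + e_k^phi), one has (u_xi*u_phi)/(u_xi + u_phi − u_xi*u_phi) = K/S_hat, and for each class k, (b_k^xi*u_phi + u_xi*b_k^phi)/(u_xi + u_phi − u_xi*u_phi) = (e_k^xi + e_k^phi)/S_hat. (The CBF operator can be implemented as simple addition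 of evidence parameters, i.e., equivalence of the paper's Eq. 8 and Eq. 15.) -/
open Finset in
/-- The CBF operator can be implemented as simple addition of evidence parameters:
equivalence of the paper's Eq. 8 and Eq. 15. -/
theorem cbf_eq_evidence_addition (K : ℕ) (hK : 0 < K)
    (exi ephi : Fin K → ℝ) (hexi : ∀ k, 0 ≤ exi k) (hephi : ∀ k, 0 ≤ ephi k)
    (Sxi Sphi Shat : ℝ) (bxi bphi : Fin K → ℝ) (u_xi u_phi : ℝ)
    (hSxi : Sxi = K + ∑ k, exi k) (hSphi : Sphi = K + ∑ k, ephi k)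
    (hbxi : ∀ k, bxi k = exi k / Sxi) (hbphi : ∀ k, bphi k = ephi k / Sphi)
    (huxi : u_xi = K / Sxi) (huphi : u_phi = K / Sphi)
    (hShat : Shat = K + ∑ k, (exi k + ephi k)) :
    (u_xi * u_phi) / (u_xi + u_phi - u_xi * u_phi) = K / Shat ∧
    ∀ k, (bxi k * u_phi + u_xi * bphi k) / (u_xi + u_phi - u_xi * u_phi)
      = (exi k + ephi k) / Shat := by
  have hKR : (0:ℝ) < K := by exact_mod_cast hK
  have hxi0 : (0:ℝ) ≤ ∑ k, exi k := Finset.sum_nonneg fun k _ => hexi k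
  have hphi0 : (0:ℝ) ≤ ∑ k, ephi k := Finset.sum_nonneg fun k _ => hephi k
  have hSxi0 : 0 < Sxi := by rw [hSxi]; linarith
  have hSphi0 : 0 < Sphi := by rw [hSphi]; linarith
  have hShat0 : 0 < Shat := by
    rw [hShat, Finset.sum_add_distrib]; linarith
  have hsum : Shat = Sxi + Sphi - K := by
    rw [hShat, hSxi, hSphi, Finset.sum_add_distrib]; ring
  have hden : u_xi + u_phi - u_xi * u_phi = K * Shat / (Sxi * Sphi) := by
    rw [huxi, huphi, hsum]
    field_simp
    ring
  have hden0 : u_xi + u_phi - u_xi * u_phi ≠ 0 := by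
    rw [hden]
    positivity
  constructor
  · rw [hden, huxi, huphi]
    field_simp
  · intro k
    rw [hden, huxi, huphi, hbxi, hbphi]
    field_simp
end

section
/- Let L be a positive integer and let u_1, …, u_L be real numbers with 0 < u_ℓ ≤ 1 for each ℓ. Then the iterated CBF fused uncertainty of all L views (obtained by successively applying the two-view fusion rule u ↦ (u * u_ℓ)/(u + u_ℓ − u*u_ℓ)) is at most the minimum of u_1, …, u_L. (Generalization of Proposition 1 to the fusion of L neighborhoods.) -/
/-- Two-view CBF fusion rule for uncertainty masses. -/
noncomputable def cbfU (u v : ℝ) : ℝ := (u * v) / (u + v - u * v)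

/-- Iterated CBF fusion of a list of uncertainty masses: fuse the first two,
then fuse the result with the third, and so on. -/
noncomputable def iterCBF : List ℝ → ℝ
  | [] => 1
  | x :: xs => xs.foldl cbfU x

lemma cbfU_denom_pos {u v : ℝ} (hu : 0 < u) (hu1 : u ≤ 1) (hv : 0 < v) :
    0 < u + v - u * v := by nlinarith

lemma cbfU_pos {u v : ℝ} (hu : 0 < u) (hu1 : u ≤ 1) (hv : 0 < v) :
    0 < cbfU u v := div_pos (by positivity) (cbfU_denom_pos hu hu1 hv)

lemma cbfU_le_left {u v : ℝ} (hu : 0 < u) (hu1 : u ≤ 1) (hv : 0 < v) (hv1 : v ≤ 1) :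
    cbfU u v ≤ u := by
  rw [cbfU, div_le_iff₀ (cbfU_denom_pos hu hu1 hv)]
  nlinarith [mul_nonneg (mul_nonneg hu.le hu.le) (sub_nonneg.2 hv1)]

lemma cbfU_le_right {u v : ℝ} (hu : 0 < u) (hu1 : u ≤ 1) (hv : 0 < v) (hv1 : v ≤ 1) :
    cbfU u v ≤ v := by
  rw [cbfU, div_le_iff₀ (cbfU_denom_pos hu hu1 hv)]
  nlinarith [mul_nonneg (mul_nonneg hv.le hv.le) (sub_nonneg.2 hu1)]

lemma foldl_cbfU (xs : List ℝ) : ∀ x : ℝ, 0 < x → x ≤ 1 →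
    (∀ y ∈ xs, 0 < y ∧ y ≤ 1) →
    0 < xs.foldl cbfU x ∧ xs.foldl cbfU x ≤ x ∧ ∀ y ∈ xs, xs.foldl cbfU x ≤ y := by
  induction xs with
  | nil => intro x hx hx1 _; exact ⟨hx, le_refl x, by simp⟩
  | cons a as ih =>
    intro x hx hx1 hall
    obtain ⟨ha, ha1⟩ := hall a (by simp)
    have hxa := cbfU_pos hx hx1 ha
    have hxa1 : cbfU x a ≤ 1 := (cbfU_le_left hx hx1 ha ha1).trans hx1
    obtain ⟨h1, h2, h3⟩ := ih (cbfU x a) hxa hxa1 (fun y hy => hall y (by simp [hy]))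
    refine ⟨h1, h2.trans (cbfU_le_left hx hx1 ha ha1), ?_⟩
    intro y hy
    rcases List.mem_cons.1 hy with rfl | hy
    · exact h2.trans (cbfU_le_right hx hx1 ha ha1)
    · exact h3 y hy

/-- Generalization of Proposition 1 to the fusion of `L` neighborhoods: the iterated
fused uncertainty is at most the minimum of the individual uncertainties. -/
theorem iterCBF_le_min (L : ℕ) (hL : 0 < L) (u : Fin L → ℝ)
    (hu : ∀ ℓ, 0 < u ℓ ∧ u ℓ ≤ 1) :
    ∀ ℓ, iterCBF (List.ofFn u) ≤ u ℓ := by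
  intro ℓ
  obtain ⟨x, xs, hcons⟩ : ∃ x xs, List.ofFn u = x :: xs := by
    cases h : List.ofFn u with
    | nil => exfalso; have : (List.ofFn u).length = L := List.length_ofFn; rw [h] at this; simp at this; omega
    | cons a b => exact ⟨a, b, rfl⟩
  have hall : ∀ y ∈ List.ofFn u, 0 < y ∧ y ≤ 1 := by
    intro y hy
    obtain ⟨i, rfl⟩ := List.mem_ofFn.1 hy
    exact hu i
  have hx : 0 < x ∧ x ≤ 1 := hall x (by rw [hcons]; simp)
  have hmem : u ℓ ∈ List.ofFn u := List.mem_ofFn.2 ⟨ℓ, rfl⟩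
  rw [hcons] at hmem hall
  obtain ⟨_, h2, h3⟩ := foldl_cbfU xs x hx.1 hx.2 (fun y hy => hall y (by simp [hy]))
  rw [hcons, iterCBF]
  rcases List.mem_cons.1 hmem with heq | hmem
  · rw [← heq] at h2 ⊢; exact h2
  · exact h3 _ hmem
end

section
/- Let u_xi, u_phi be real numbers with 0 < u_xi ≤ 1 and 0 < u_phi ≤ 1, and let b_t^xi ≥ 0, b_t^phi ≥ 0 be belief masses for a fixed class t. Then b_t^phi − b_hat_t ≤ b_t^phi − (u_xi * b_t^phi)/(u_xi + u_phi − u_xi*u_phi) ≤ b_t^phi − (u_xi * b_t^phi)/(u_xi + u_phi) = b_t^phi * (1/(u_xi/u_phi + 1)), where b_hat_t = (b_t^xi*u_phi + u_xi*b_t^phi)/(u_xi + u_phi − u_xi*u_phi). (The full chain of inequalities in the proof of Proposition 4, bounding the belief decrease caused by fusion.) -/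
/-- The full chain of inequalities in the proof of Proposition 4, bounding the
belief decrease caused by fusion. -/
theorem cbf_belief_decrease_chain (u_xi u_phi bxi bphi : ℝ)
    (hxi0 : 0 < u_xi) (hxi1 : u_xi ≤ 1) (hphi0 : 0 < u_phi) (hphi1 : u_phi ≤ 1)
    (hbxi : 0 ≤ bxi) (hbphi : 0 ≤ bphi) :
    bphi - (bxi * u_phi + u_xi * bphi) / (u_xi + u_phi - u_xi * u_phi)
        ≤ bphi - (u_xi * bphi) / (u_xi + u_phi - u_xi * u_phi) ∧
    bphi - (u_xi * bphi) / (u_xi + u_phi - u_xi * u_phi)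
        ≤ bphi - (u_xi * bphi) / (u_xi + u_phi) ∧
    bphi - (u_xi * bphi) / (u_xi + u_phi)
        = bphi * (1 / (u_xi / u_phi + 1)) := by
  have hD : 0 < u_xi + u_phi - u_xi * u_phi := by nlinarith
  have hS : 0 < u_xi + u_phi := by linarith
  refine ⟨?_, ?_, ?_⟩
  · apply sub_le_sub_left
    gcongr
    nlinarith
  · apply sub_le_sub_left
    gcongr
    nlinarith
  · field_simp
    ring
end

section
/- Let K be a positive integer, let L be a positive integer, and let e^1, …, e^L : Fin K → ℝ be evidence vectors with all entries nonnegative, each determining an opinion with Dirichlet strength S_ℓ = K + sum over k of e_k^ℓ, belief masses b_k^ℓ = e_k^ℓ/S_ℓ, and uncertainty mass u_ℓ = K/S_ℓ. Then the iterated CBF fusion of all L opinions (applying the two-view fusion rules successively) yields the opinion determined by the summed evidence vector: fused uncertainty u_hat = K / (K + sum over ℓ and k of e_k^ℓ) and fused belief masses b_hat_k = (sum over ℓ of e_k^ℓ) / (K + sum over ℓ and k of e_k^ℓ). (L-view generalization of the equivalence between CBF and evidence-parameter addition, Eq. 8.) -/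
/-- Two-view CBF fusion rule on opinions, represented as pairs
(belief mass vector, uncertainty mass). -/
noncomputable def cbfPair {K : ℕ} (p q : (Fin K → ℝ) × ℝ) : (Fin K → ℝ) × ℝ :=
  (fun k => (p.1 k * q.2 + p.2 * q.1 k) / (p.2 + q.2 - p.2 * q.2),
   (p.2 * q.2) / (p.2 + q.2 - p.2 * q.2))

/-- Iterated CBF fusion of a list of opinions: fuse the first two, then fuse the
result with the third, and so on. -/
noncomputable def iterCBFPair {K : ℕ} : List ((Fin K → ℝ) × ℝ) → (Fin K → ℝ) × ℝ
  | [] => (fun _ => 0, 1)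
  | x :: xs => xs.foldl cbfPair x

open Finset

/-- The opinion determined by an evidence vector. -/
noncomputable def opin {K : ℕ} (a : Fin K → ℝ) : (Fin K → ℝ) × ℝ :=
  ((fun k => a k / (K + ∑ k', a k')), (K : ℝ) / (K + ∑ k', a k'))

lemma cbfPair_opin {K : ℕ} (hK : 0 < K) (a b : Fin K → ℝ)
    (ha : ∀ k, 0 ≤ a k) (hb : ∀ k, 0 ≤ b k) :
    cbfPair (opin a) (opin b) = opin (a + b) := by
  have hA : 0 ≤ ∑ k, a k := Finset.sum_nonneg fun k _ => ha k
  have hB : 0 ≤ ∑ k, b k := Finset.sum_nonneg fun k _ => hb k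
  have hKpos : (0:ℝ) < K := by exact_mod_cast hK
  set A := ∑ k, a k
  set B := ∑ k, b k
  have hKA : (0:ℝ) < K + A := by linarith
  have hKB : (0:ℝ) < K + B := by linarith
  have hKAB : (0:ℝ) < K + (A + B) := by linarith
  have hsum : ∑ k', (a + b) k' = A + B := by
    simp [Pi.add_apply, Finset.sum_add_distrib, A, B]
  have hden : (K:ℝ) / (K + A) + K / (K + B) - K / (K + A) * (K / (K + B))
      = K * (K + (A + B)) / ((K + A) * (K + B)) := by
    field_simp
    ring
  have hdne : (K:ℝ) / (K + A) + K / (K + B) - K / (K + A) * (K / (K + B)) ≠ 0 := by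
    rw [hden]
    positivity
  unfold cbfPair opin
  simp only [hsum]
  refine Prod.ext ?_ ?_
  · funext k
    simp only
    rw [hden]
    rw [div_eq_div_iff (by positivity) (by positivity)]
    simp only [A, B, Pi.add_apply] at *
    field_simp
  · simp only
    rw [hden]
    rw [div_eq_div_iff (by positivity) (by positivity)]
    simp only [A, B] at *
    field_simp

lemma foldl_opin {K : ℕ} (hK : 0 < K) (es : List (Fin K → ℝ))
    (hes : ∀ a ∈ es, ∀ k, 0 ≤ a k) :
    ∀ (x : Fin K → ℝ), (∀ k, 0 ≤ x k) →
      (es.map opin).foldl cbfPair (opin x) = opin (x + es.sum) := by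
  induction es with
  | nil => intro x _; simp
  | cons a es ih =>
    intro x hx
    have ha : ∀ k, 0 ≤ a k := hes a List.mem_cons_self
    simp only [List.map_cons, List.foldl_cons, List.sum_cons]
    rw [cbfPair_opin hK x a hx ha]
    rw [ih (fun b hb => hes b (List.mem_cons_of_mem _ hb)) (x + a)
      (fun k => add_nonneg (hx k) (ha k))]
    rw [add_assoc]

open Finset in
/-- L-view generalization of the equivalence between CBF and evidence-parameter
addition (Eq. 8 of the paper). -/
theorem iterCBF_eq_evidence_addition (K L : ℕ) (hK : 0 < K) (hL : 0 < L)
    (e : Fin L → Fin K → ℝ) (he : ∀ ℓ k, 0 ≤ e ℓ k) :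
    iterCBFPair (List.ofFn (fun ℓ : Fin L =>
        ((fun k => e ℓ k / (K + ∑ k', e ℓ k') : Fin K → ℝ),
         (K : ℝ) / (K + ∑ k', e ℓ k'))))
      = ((fun k => (∑ ℓ, e ℓ k) / (K + ∑ ℓ, ∑ k', e ℓ k') : Fin K → ℝ),
         (K : ℝ) / (K + ∑ ℓ, ∑ k', e ℓ k')) := by
  obtain ⟨n, rfl⟩ : ∃ n, L = n + 1 := ⟨L - 1, (Nat.succ_pred_eq_of_pos hL).symm⟩
  have key : List.ofFn (fun ℓ : Fin (n+1) =>
      ((fun k => e ℓ k / (K + ∑ k', e ℓ k') : Fin K → ℝ),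
       (K : ℝ) / (K + ∑ k', e ℓ k')))
      = (List.ofFn (fun ℓ : Fin (n+1) => e ℓ)).map opin := by
    rw [List.map_ofFn]
    rfl
  rw [key, List.ofFn_succ, List.map_cons]
  show ((List.ofFn fun i : Fin n => e i.succ).map opin).foldl cbfPair (opin (e 0)) = _
  rw [foldl_opin hK _ (by
      intro a ha k
      obtain ⟨i, rfl⟩ := List.mem_ofFn.mp ha
      exact he _ k) (e 0) (he 0)]
  have hsum : e 0 + (List.ofFn fun i : Fin n => e i.succ).sum = ∑ ℓ, e ℓ := by
    rw [List.sum_ofFn, Fin.sum_univ_succ]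
  rw [hsum]
  unfold opin
  have h1 : ∀ k : Fin K, (∑ ℓ, e ℓ) k = ∑ ℓ, e ℓ k := fun k => by
    simp [Finset.sum_apply]
  have h2 : ∑ k', (∑ ℓ, e ℓ) k' = ∑ ℓ, ∑ k', e ℓ k' := by
    simp only [Finset.sum_apply]
    exact Finset.sum_comm
  refine Prod.ext ?_ ?_
  · funext k; simp only [h1, h2]; rw [Finset.sum_comm]
  · simp only [h2]
end
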